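/- Let D_k, D_ℓ : R → R be derivations, each commuting with ∂ and annihilating h, extended coefficientwise to Ψ(R). Let L = h²∂² + 2u with u ∈ R, fix k, ℓ ≥ 0, set aₙ = 1/(2n+1)!!, and suppose the Lax equations D_k(L) = (a_k/h) [ (L^{k+1/2})₊ , L ] and D_ℓ(L) = (a_ℓ/h) [ (L^{ℓ+1/2})₊ , L ] hold. Then the Zakharov–Shabat zero-curvature equation holds: (h/a_k) · D_k( (L^{ℓ+1/2})₊ ) − (h/a_ℓ) · D_ℓ( (L^{k+1/2})₊ ) = [ (L^{k+1/2})₊ , (L^{ℓ+1/2})₊ ]; moreover the same identity holds with both projections (·)₊ replaced by −(·)₋. -/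

import Mathlib

/-!
For a derivation `d`, pseudo-differential operators form an associative ring. Associativity is
checked on triples of monomials, where it is the Chu–Vandermonde identity for generalized binomial
coefficients, and it extends to all operators because a fixed coefficient of a triple product
only involves finitely many coefficients of the factors.

Let `M` play the role of `L^{1/2}`. A derivation of this ring is determined on the powers of `M`
by its value on `L = M²`: the difference of two such derivations at `M` anticommutes with `M`,
and comparing leading coefficients (`h` is a unit, `2` is invertible) shows it vanishes. Both
`X ↦ (h/a_k) D_k X` and `[(M^{2k+1})₊, ·]` are derivations that agree on `L` by the Lax equation,
so `(h/a_k) D_k M^{2l+1} = [(M^{2k+1})₊, M^{2l+1}]`. Finally `P = M^{2k+1}` and `Q = M^{2l+1}`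
commute, and splitting both into differential and integral parts gives
`[P₊, Q] - [Q₊, P] = [P₊, Q₊] - [P₋, Q₋]`, whose differential part and integral part are the two
zero-curvature equations.
-/

open scoped BigOperators

/-- Generalized binomial coefficient `C(k,l) = k(k-1)⋯(k-l+1)/l!` for `k : ℤ`. -/
def gbinom (k : ℤ) (l : ℕ) : ℚ :=
  (∏ i ∈ Finset.range l, ((k : ℚ) - i)) / (Nat.factorial l)

/-- Pseudo-differential operators (and symbols): coefficient functions `ℤ → R`
with support bounded above.  The parameter `d` (the derivation) determines the product. -/
structure PDO (R : Type) [CommRing R] [Algebra ℚ R] (d : R →+ R) where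
  coeff : ℤ → R
  bdd : ∃ N : ℤ, ∀ n : ℤ, N < n → coeff n = 0

namespace PDO

variable {R : Type} [CommRing R] [Algebra ℚ R] {d : R →+ R}

theorem ext' {A B : PDO R d} (h : A.coeff = B.coeff) : A = B := by
  cases A; cases B; cases h; rfl

set_option linter.unusedSectionVars false in
theorem iterD_zero (d : R →+ R) (j : ℕ) : d^[j] (0 : R) = 0 := by
  induction j with
  | zero => rfl
  | succ j ih => rw [Function.iterate_succ_apply', ih, map_zero]

instance : Zero (PDO R d) := ⟨⟨fun _ => 0, ⟨0, fun _ _ => rfl⟩⟩⟩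

instance : One (PDO R d) :=
  ⟨⟨fun n => if n = 0 then 1 else 0, ⟨0, fun n hn => if_neg (by omega)⟩⟩⟩

instance : Add (PDO R d) :=
  ⟨fun A B => ⟨fun n => A.coeff n + B.coeff n, by
    obtain ⟨N, hN⟩ := A.bdd
    obtain ⟨M, hM⟩ := B.bdd
    exact ⟨max N M, fun n hn => by
      show A.coeff n + B.coeff n = 0
      rw [hN n (lt_of_le_of_lt (le_max_left N M) hn),
        hM n (lt_of_le_of_lt (le_max_right N M) hn), add_zero]⟩⟩⟩

instance : Neg (PDO R d) :=
  ⟨fun A => ⟨fun n => -A.coeff n, by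
    obtain ⟨N, hN⟩ := A.bdd
    exact ⟨N, fun n hn => by show -A.coeff n = 0; rw [hN n hn, neg_zero]⟩⟩⟩

instance : SMul ℚ (PDO R d) :=
  ⟨fun c A => ⟨fun n => c • A.coeff n, by
    obtain ⟨N, hN⟩ := A.bdd
    exact ⟨N, fun n hn => by show c • A.coeff n = 0; rw [hN n hn, smul_zero]⟩⟩⟩

instance : AddCommGroup (PDO R d) where
  add := (· + ·)
  zero := 0
  neg := Neg.neg
  add_assoc A B C := ext' (funext fun n => add_assoc (A.coeff n) (B.coeff n) (C.coeff n))
  zero_add A := ext' (funext fun n => zero_add (A.coeff n))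
  add_zero A := ext' (funext fun n => add_zero (A.coeff n))
  add_comm A B := ext' (funext fun n => add_comm (A.coeff n) (B.coeff n))
  neg_add_cancel A := ext' (funext fun n => neg_add_cancel (A.coeff n))
  nsmul := nsmulRec
  zsmul := zsmulRec

/-- The product of pseudo-differential operators, determined by the commutation rule
`∂^k · f = Σ_{l ≥ 0} C(k,l) (∂^l f) ∂^(k-l)`. -/
noncomputable instance : Mul (PDO R d) :=
  ⟨fun A B =>
    ⟨fun n => ∑ᶠ (k : ℤ) (m : ℤ),
        if _ : 0 ≤ k + m - n then
          A.coeff k * (gbinom k (k + m - n).toNat • (d^[(k + m - n).toNat] (B.coeff m)))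
        else 0, by
      obtain ⟨N, hN⟩ := A.bdd
      obtain ⟨M, hM⟩ := B.bdd
      refine ⟨N + M, fun n hn => ?_⟩
      have hz : ∀ k m : ℤ,
          (if _ : 0 ≤ k + m - n then
            A.coeff k * (gbinom k (k + m - n).toNat • (d^[(k + m - n).toNat] (B.coeff m)))
          else 0) = 0 := by
        intro k m
        by_cases hl : 0 ≤ k + m - n
        · rw [dif_pos hl]
          by_cases hk : N < k
          · rw [hN k hk, zero_mul]
          · rw [hM m (by omega), iterD_zero, smul_zero, mul_zero]
        · rw [dif_neg hl]
      simp only [hz, finsum_zero]⟩⟩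

noncomputable def npow (A : PDO R d) : ℕ → PDO R d
  | 0 => 1
  | n + 1 => npow A n * A

noncomputable instance : Pow (PDO R d) ℕ := ⟨fun A n => A.npow n⟩

/-- The monomial `r ∂^k`. -/
def mono (r : R) (k : ℤ) : PDO R d :=
  ⟨fun n => if n = k then r else 0, ⟨k, fun n hn => if_neg (by omega)⟩⟩

/-- The constant (order-zero) operator `r`. -/
def const (r : R) : PDO R d := mono r 0

/-- The operator `∂`. -/
def del : PDO R d := mono (1 : R) 1

/-- The operator `h∂`. -/
def hdel (h : Rˣ) : PDO R d := mono (h : R) 1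

/-- The Lax operator `L = h²∂² + 2u`. -/
def Lop (h : Rˣ) (u : R) : PDO R d :=
  ⟨fun n => if n = 2 then (h : R) ^ 2 else if n = 0 then 2 * u else 0,
   ⟨2, fun n hn => by
      show (if n = 2 then (h : R) ^ 2 else if n = 0 then 2 * u else 0) = 0
      rw [if_neg (by omega), if_neg (by omega)]⟩⟩

/-- The differential part `A₊`. -/
def pos (A : PDO R d) : PDO R d :=
  ⟨fun n => if 0 ≤ n then A.coeff n else 0, by
    obtain ⟨N, hN⟩ := A.bdd
    refine ⟨N, fun n hn => ?_⟩
    show (if 0 ≤ n then A.coeff n else 0) = 0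
    by_cases h0 : (0 : ℤ) ≤ n
    · rw [if_pos h0]; exact hN n hn
    · rw [if_neg h0]⟩

/-- The integral part `A₋ = A − A₊`. -/
def negp (A : PDO R d) : PDO R d :=
  ⟨fun n => if n < 0 then A.coeff n else 0, ⟨0, fun n hn => if_neg (by omega)⟩⟩

/-- The residue `Res_∂ A = a₋₁`. -/
def res (A : PDO R d) : R := A.coeff (-1)

/-- The formal adjoint, determined by `(f ∂^k)* = (−∂)^k · f`. -/
noncomputable def adj (A : PDO R d) : PDO R d :=
  ⟨fun n => ∑ᶠ k : ℤ,
      if _ : 0 ≤ k - n then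
        (((-1 : ℚ) ^ k) * gbinom k (k - n).toNat) • (d^[(k - n).toNat] (A.coeff k))
      else 0, by
    obtain ⟨N, hN⟩ := A.bdd
    refine ⟨N, fun n hn => ?_⟩
    have hz : ∀ k : ℤ, (if _ : 0 ≤ k - n then
        (((-1 : ℚ) ^ k) * gbinom k (k - n).toNat) • (d^[(k - n).toNat] (A.coeff k))
      else 0) = 0 := by
      intro k
      by_cases hl : 0 ≤ k - n
      · rw [dif_pos hl, hN k (by omega), iterD_zero, smul_zero]
      · rw [dif_neg hl]
    simp only [hz, finsum_zero]⟩

/-- The operator `P(h∂) = Σ pₙ hⁿ ∂ⁿ` associated to the symbol `P(λ) = Σ pₙ λⁿ`. -/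
noncomputable def ofSymbol (h : Rˣ) (A : PDO R d) : PDO R d :=
  ⟨fun n => A.coeff n * ((h ^ n : Rˣ) : R), by
    obtain ⟨N, hN⟩ := A.bdd
    exact ⟨N, fun n hn => by show A.coeff n * ((h ^ n : Rˣ) : R) = 0; rw [hN n hn, zero_mul]⟩⟩

/-- Apply `d^[i]` to each coefficient. -/
def mapD (i : ℕ) (A : PDO R d) : PDO R d :=
  ⟨fun n => d^[i] (A.coeff n), by
    obtain ⟨N, hN⟩ := A.bdd
    exact ⟨N, fun n hn => by show d^[i] (A.coeff n) = 0; rw [hN n hn, iterD_zero]⟩⟩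

/-- The coefficientwise extension of an additive map `D : R →+ R`. -/
def mapHom (D : R →+ R) (A : PDO R d) : PDO R d :=
  ⟨fun n => D (A.coeff n), by
    obtain ⟨N, hN⟩ := A.bdd
    exact ⟨N, fun n hn => by show D (A.coeff n) = 0; rw [hN n hn, map_zero]⟩⟩

/-- The commutator `[A, B] = AB − BA`. -/
noncomputable def comm (A B : PDO R d) : PDO R d := A * B - B * A

end PDO

/-- The Leibniz rule: `d` is a derivation. -/
def Leibniz {R : Type} [CommRing R] [Algebra ℚ R] (d : R →+ R) : Prop :=
  ∀ a b : R, d (a * b) = a * d b + b * d a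

/-- `aₙ = 1/(2n+1)!!`. -/
def kdvA (n : ℕ) : ℚ := 1 / (Nat.doubleFactorial (2 * n + 1))

/-- `bₙ = (2n−1)!!` (with `b₀ = (−1)!! = 1`). -/
def kdvB (n : ℕ) : ℚ := (Nat.doubleFactorial (2 * n - 1) : ℕ)

open Finset

theorem gbinom_eq_choose (k : ℤ) (l : ℕ) : gbinom k l = Ring.choose (k : ℚ) l := by
  rw [gbinom, Ring.choose_eq_smul, ← Polynomial.aeval_eq_smeval, Polynomial.aeval_def,
    Polynomial.eval₂_eq_eval_map, descPochhammer_map, descPochhammer_eval_eq_prod_range,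
    smul_eq_mul, div_eq_inv_mul]

theorem gbinom_zero_right (k : ℤ) : gbinom k 0 = 1 := by simp [gbinom]

theorem gbinom_eq_zero_of_lt {k : ℤ} {l : ℕ} (h0 : 0 ≤ k) (hl : k < l) : gbinom k l = 0 := by
  lift k to ℕ using h0
  rw [gbinom_eq_choose, Int.cast_natCast, Ring.choose_natCast,
    Nat.choose_eq_zero_of_lt (by omega), Nat.cast_zero]

theorem Ring.sum_choose_mul_choose_mul_choose (x y : ℚ) {s N : ℕ} (hs : s ≤ N) :
    ∑ t ∈ Ico s (N + 1), Ring.choose x t * t.choose s * Ring.choose y (N - t)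
      = Ring.choose x s * Ring.choose (x + y - s) (N - s) := by
  have trinomial : ∀ u, Ring.choose x (s + u) * (s + u).choose s
      = Ring.choose x s * Ring.choose (x - s) u := fun u => by
    rw [mul_comm, ← nsmul_eq_mul, Ring.choose_smul_choose x (Nat.le_add_right s u),
      Nat.add_sub_cancel_left]
  rw [sum_Ico_eq_sum_range, show x + y - s = (x - s) + y by ring,
    Ring.add_choose_eq _ (Commute.all _ _), Nat.sum_antidiagonal_eq_sum_range_succ_mk, mul_sum,
    show N + 1 - s = N - s + 1 by omega]
  refine sum_congr rfl fun u hu => ?_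
  rw [trinomial, mul_assoc, show N - (s + u) = N - s - u by omega]

theorem Ring.sum_sum_choose_smul {V : Type*} [AddCommGroup V] [Module ℚ V] (x y : ℚ) (N : ℕ)
    (F : ℕ → V) :
    ∑ t ∈ range (N + 1), ∑ i ∈ range (t + 1),
        (Ring.choose x t * Ring.choose y (N - t) * t.choose i) • F i
      = ∑ s ∈ range (N + 1), (Ring.choose x s * Ring.choose (x + y - s) (N - s)) • F s := by
  simp only [range_eq_Ico]
  rw [← sum_Ico_Ico_comm 0 (N + 1) (fun i t =>
    (Ring.choose x t * Ring.choose y (N - t) * t.choose i) • F i)]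
  refine sum_congr rfl fun s hs => ?_
  rw [← sum_smul, ← Ring.sum_choose_mul_choose_mul_choose x y (by simp at hs; omega)]
  congr 1
  exact sum_congr rfl fun t _ => by ring

namespace Leibniz

variable {R : Type} [CommRing R] [Algebra ℚ R] {d : R →+ R}

theorem map_one (hd : Leibniz d) : d 1 = 0 := by
  simpa using hd 1 1

theorem iterate_map_mul (hd : Leibniz d) (n : ℕ) (x y : R) :
    d^[n] (x * y) = ∑ i ∈ range (n + 1), n.choose i • (d^[i] x * d^[n - i] y) := by
  induction n with
  | zero => simp
  | succ n ih =>
    rw [Function.iterate_succ_apply', ih, map_sum,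
      sum_choose_succ_nsmul (fun i j => d^[i] x * d^[j] y), ← sum_add_distrib]
    refine sum_congr rfl fun i hi => ?_
    rw [map_nsmul, hd, ← smul_add, show n + 1 - i = n - i + 1 by simp at hi; omega]
    simp only [Function.iterate_succ_apply']
    ring

end Leibniz

namespace AddMonoidHom

theorem iterate_eq_zero {M : Type*} [AddMonoid M] {f : M →+ M} {x : M} (hx : f x = 0) {n : ℕ}
    (hn : n ≠ 0) : f^[n] x = 0 := by
  obtain ⟨n, rfl⟩ := Nat.exists_eq_succ_of_ne_zero hn
  rw [Function.iterate_succ_apply, hx, iterate_map_zero]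

theorem iterate_map_rat_smul {M : Type*} [AddCommGroup M] [Module ℚ M] (f : M →+ M) (n : ℕ)
    (c : ℚ) (x : M) : f^[n] (c • x) = c • f^[n] x :=
  map_rat_smul ((show AddMonoid.End M from f) ^ n) c x

end AddMonoidHom

namespace PDO

variable {R : Type} [CommRing R] [Algebra ℚ R] {d : R →+ R}

@[ext]
theorem ext {A B : PDO R d} (h : ∀ n, A.coeff n = B.coeff n) : A = B := ext' (funext h)

@[simp] theorem zero_coeff (n : ℤ) : (0 : PDO R d).coeff n = 0 := rfl
@[simp] theorem one_coeff (n : ℤ) : (1 : PDO R d).coeff n = if n = 0 then 1 else 0 := rfl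
@[simp] theorem add_coeff (A B : PDO R d) (n : ℤ) : (A + B).coeff n = A.coeff n + B.coeff n := rfl
@[simp] theorem neg_coeff (A : PDO R d) (n : ℤ) : (-A).coeff n = -A.coeff n := rfl
@[simp] theorem sub_coeff (A B : PDO R d) (n : ℤ) : (A - B).coeff n = A.coeff n - B.coeff n :=
  (sub_eq_add_neg _ _).symm
@[simp] theorem smul_coeff (c : ℚ) (A : PDO R d) (n : ℤ) : (c • A).coeff n = c • A.coeff n := rfl
@[simp] theorem mono_coeff (r : R) (k n : ℤ) :
    (mono r k : PDO R d).coeff n = if n = k then r else 0 := rfl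
@[simp] theorem const_coeff (r : R) (n : ℤ) :
    (const r : PDO R d).coeff n = if n = 0 then r else 0 := rfl
@[simp] theorem pos_coeff (A : PDO R d) (n : ℤ) :
    (pos A).coeff n = if 0 ≤ n then A.coeff n else 0 := rfl
@[simp] theorem negp_coeff (A : PDO R d) (n : ℤ) :
    (negp A).coeff n = if n < 0 then A.coeff n else 0 := rfl
@[simp] theorem mapHom_coeff (D : R →+ R) (A : PDO R d) (n : ℤ) :
    (mapHom D A).coeff n = D (A.coeff n) := rfl

theorem sum_coeff {ι : Type*} (s : Finset ι) (f : ι → PDO R d) (n : ℤ) :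
    (∑ i ∈ s, f i).coeff n = ∑ i ∈ s, (f i).coeff n :=
  map_sum (AddMonoidHom.mk' (fun A : PDO R d => A.coeff n) fun _ _ => rfl) f s

instance : Module ℚ (PDO R d) where
  one_smul A := ext fun n => one_smul ℚ (A.coeff n)
  mul_smul c c' A := ext fun n => mul_smul c c' (A.coeff n)
  smul_zero c := ext fun _ => smul_zero c
  smul_add c A B := ext fun n => smul_add c (A.coeff n) (B.coeff n)
  add_smul c c' A := ext fun n => add_smul c c' (A.coeff n)
  zero_smul A := ext fun n => zero_smul ℚ (A.coeff n)

def OrderLE (A : PDO R d) (N : ℤ) : Prop := ∀ n, N < n → A.coeff n = 0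

theorem OrderLE.mono {A : PDO R d} {M N : ℤ} (hA : OrderLE A M) (h : M ≤ N) : OrderLE A N :=
  fun n hn => hA n (by omega)

theorem OrderLE.le_of_coeff_ne_zero {A : PDO R d} {N n : ℤ} (hA : OrderLE A N)
    (h : A.coeff n ≠ 0) : n ≤ N :=
  not_lt.1 fun hn => h (hA n hn)

theorem OrderLE.add {A B : PDO R d} {N : ℤ} (hA : OrderLE A N) (hB : OrderLE B N) :
    OrderLE (A + B) N :=
  fun n hn => by simp [hA n hn, hB n hn]

theorem orderLE_mono (r : R) (k : ℤ) : OrderLE (mono r k : PDO R d) k :=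
  fun n hn => if_neg (by omega)

theorem exists_orderLE₃ (A B C : PDO R d) :
    ∃ N, OrderLE A N ∧ OrderLE B N ∧ OrderLE C N := by
  obtain ⟨a, ha⟩ := A.bdd
  obtain ⟨b, hb⟩ := B.bdd
  obtain ⟨c, hc⟩ := C.bdd
  exact ⟨max a (max b c), OrderLE.mono ha (by omega), OrderLE.mono hb (by omega),
    OrderLE.mono hc (by omega)⟩

noncomputable def mulTerm (A B : PDO R d) (n k m : ℤ) : R :=
  if _ : 0 ≤ k + m - n then
    A.coeff k * (gbinom k (k + m - n).toNat • (d^[(k + m - n).toNat] (B.coeff m)))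
  else 0

theorem coeff_mul (A B : PDO R d) (n : ℤ) :
    (A * B).coeff n = ∑ᶠ (k : ℤ) (m : ℤ), mulTerm A B n k m := rfl

theorem mulTerm_ne_zero {A B : PDO R d} {n k m : ℤ} (h : mulTerm A B n k m ≠ 0) :
    A.coeff k ≠ 0 ∧ B.coeff m ≠ 0 ∧ n ≤ k + m := by
  unfold mulTerm at h
  split_ifs at h with hkm
  · refine ⟨fun hA => h (by rw [hA, zero_mul]), fun hB => h ?_, by omega⟩
    rw [hB, iterate_map_zero, smul_zero, mul_zero]
  · exact absurd rfl h

theorem coeff_mul_eq_sum {A B : PDO R d} {n : ℤ} (s t : Finset ℤ)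
    (hst : ∀ k m, A.coeff k ≠ 0 → B.coeff m ≠ 0 → n ≤ k + m → k ∈ s ∧ m ∈ t) :
    (A * B).coeff n = ∑ k ∈ s, ∑ m ∈ t, mulTerm A B n k m := by
  have mem : ∀ k m, mulTerm A B n k m ≠ 0 → k ∈ s ∧ m ∈ t := fun k m h =>
    hst k m (mulTerm_ne_zero h).1 (mulTerm_ne_zero h).2.1 (mulTerm_ne_zero h).2.2
  rw [coeff_mul, finsum_eq_sum_of_support_subset _ (s := s) fun k hk => ?_]
  · exact sum_congr rfl fun k _ => finsum_eq_sum_of_support_subset _ fun m hm => (mem k m hm).2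
  · by_contra hks
    refine hk (finsum_eq_zero_of_forall_eq_zero fun m => ?_)
    by_contra hm
    exact hks (mem k m hm).1

theorem coeff_mul_eq_sum_Icc {A B : PDO R d} {N : ℤ} (hA : OrderLE A N) (hB : OrderLE B N)
    (n : ℤ) : (A * B).coeff n = ∑ k ∈ Icc (n - N) N, ∑ m ∈ Icc (n - N) N, mulTerm A B n k m := by
  refine coeff_mul_eq_sum _ _ fun k m hk hm hn => ?_
  have := hA.le_of_coeff_ne_zero hk
  have := hB.le_of_coeff_ne_zero hm
  simp only [mem_Icc]
  omega

theorem OrderLE.mul {A B : PDO R d} {a b : ℤ} (hA : OrderLE A a) (hB : OrderLE B b) :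
    OrderLE (A * B) (a + b) := fun n hn => by
  rw [coeff_mul_eq_sum ∅ ∅ fun k m hk hm hkm => ?_, sum_empty]
  have := hA.le_of_coeff_ne_zero hk
  have := hB.le_of_coeff_ne_zero hm
  omega

theorem mulTerm_add_left (A A' B : PDO R d) (n k m : ℤ) :
    mulTerm (A + A') B n k m = mulTerm A B n k m + mulTerm A' B n k m := by
  unfold mulTerm; split_ifs <;> simp [add_mul]

theorem mulTerm_add_right (A B B' : PDO R d) (n k m : ℤ) :
    mulTerm A (B + B') n k m = mulTerm A B n k m + mulTerm A B' n k m := by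
  unfold mulTerm; split_ifs <;> simp [iterate_map_add, mul_add]

theorem mulTerm_smul_left (c : ℚ) (A B : PDO R d) (n k m : ℤ) :
    mulTerm (c • A) B n k m = c • mulTerm A B n k m := by
  unfold mulTerm; split_ifs <;> simp [smul_comm c]

theorem mulTerm_smul_right (c : ℚ) (A B : PDO R d) (n k m : ℤ) :
    mulTerm A (c • B) n k m = c • mulTerm A B n k m := by
  unfold mulTerm; split_ifs <;> simp [AddMonoidHom.iterate_map_rat_smul, smul_comm c]

theorem mul_add' (A B C : PDO R d) : A * (B + C) = A * B + A * C := by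
  ext n
  obtain ⟨N, hA, hB, hC⟩ := exists_orderLE₃ A B C
  simp only [add_coeff, coeff_mul_eq_sum_Icc hA (hB.add hC), coeff_mul_eq_sum_Icc hA hB,
    coeff_mul_eq_sum_Icc hA hC, mulTerm_add_right, sum_add_distrib]

theorem add_mul' (A B C : PDO R d) : (A + B) * C = A * C + B * C := by
  ext n
  obtain ⟨N, hA, hB, hC⟩ := exists_orderLE₃ A B C
  simp only [add_coeff, coeff_mul_eq_sum_Icc (hA.add hB) hC, coeff_mul_eq_sum_Icc hA hC,
    coeff_mul_eq_sum_Icc hB hC, mulTerm_add_left, sum_add_distrib]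

theorem mul_zero' (A : PDO R d) : A * 0 = 0 := by
  ext n
  rw [coeff_mul_eq_sum ∅ ∅ fun _ _ _ h => absurd rfl h]
  rfl

theorem zero_mul' (A : PDO R d) : 0 * A = 0 := by
  ext n
  rw [coeff_mul_eq_sum ∅ ∅ fun _ _ h => absurd rfl h]
  rfl

instance : IsScalarTower ℚ (PDO R d) (PDO R d) where
  smul_assoc c A B := by
    ext n
    obtain ⟨N, hA, hB, -⟩ := exists_orderLE₃ A B B
    have hcA : OrderLE (c • A) N := fun n hn => by simp [hA n hn]
    simp only [smul_eq_mul, smul_coeff, coeff_mul_eq_sum_Icc hcA hB, coeff_mul_eq_sum_Icc hA hB,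
      mulTerm_smul_left, smul_sum]

instance : SMulCommClass ℚ (PDO R d) (PDO R d) where
  smul_comm c A B := by
    ext n
    obtain ⟨N, hA, hB, -⟩ := exists_orderLE₃ A B B
    have hcB : OrderLE (c • B) N := fun n hn => by simp [hB n hn]
    simp only [smul_eq_mul, smul_coeff, coeff_mul_eq_sum_Icc hA hcB, coeff_mul_eq_sum_Icc hA hB,
      mulTerm_smul_right, smul_sum]

theorem coeff_mono_mul {X : PDO R d} {x : ℤ} (hX : OrderLE X x) (a : R) (k : ℤ) (N : ℕ) :
    (mono a k * X).coeff (k + x - N)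
      = ∑ t ∈ range (N + 1), a * (gbinom k t • d^[t] (X.coeff (x - N + t))) := by
  rw [coeff_mul_eq_sum {k} ((range (N + 1)).image fun t : ℕ => x - N + t)
      fun k' m hk hm hkm => ?_, sum_singleton, sum_image fun _ _ _ _ h => by simpa using h]
  · refine sum_congr rfl fun t _ => ?_
    rw [mulTerm, dif_pos (by omega), show k + (x - N + t) - (k + x - N) = t by ring,
      Int.toNat_natCast, mono_coeff, if_pos rfl]
  · have hk' : k' = k := by_contra fun h => hk (if_neg h)
    have := hX.le_of_coeff_ne_zero hm
    simp only [mem_singleton, mem_image, mem_range]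
    exact ⟨hk', (m - x + N).toNat, by omega, by omega⟩

theorem coeff_mul_mono {X : PDO R d} {x : ℤ} (hX : OrderLE X x) (c : R) (p : ℤ) (N : ℕ) :
    (X * mono c p).coeff (x + p - N)
      = ∑ s ∈ range (N + 1), X.coeff (x - s) * (gbinom (x - s) (N - s) • d^[N - s] c) := by
  rw [coeff_mul_eq_sum ((range (N + 1)).image fun s : ℕ => x - s) {p} fun k m hk hm hkm => ?_,
    sum_image fun _ _ _ _ h => by simpa using h]
  · refine sum_congr rfl fun s hs => ?_
    rw [sum_singleton, mulTerm, dif_pos (by simp at hs; omega),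
      show (x - s + p - (x + p - N)).toNat = N - s by simp at hs; omega, mono_coeff, if_pos rfl]
  · have hm' : m = p := by_contra fun h => hm (if_neg h)
    have := hX.le_of_coeff_ne_zero hk
    simp only [mem_singleton, mem_image, mem_range]
    exact ⟨⟨(x - k).toNat, by omega, by omega⟩, hm'⟩

theorem coeff_mono_mul_mono (a b : R) (k m : ℤ) (N : ℕ) :
    (mono a k * mono b m : PDO R d).coeff (k + m - N) = a * (gbinom k N • d^[N] b) := by
  rw [coeff_mono_mul (orderLE_mono b m), sum_eq_single_of_mem N (by simp) fun t _ ht => ?_]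
  · simp
  · rw [mono_coeff, if_neg (by omega), iterate_map_zero, smul_zero, mul_zero]

theorem mul_assoc_mono (hd : Leibniz d) (a b c : R) (k m p : ℤ) :
    (mono a k * mono b m) * mono c p = (mono a k * (mono b m * mono c p) : PDO R d) := by
  ext n
  have hab := (orderLE_mono a k).mul (orderLE_mono (d := d) b m)
  have hbc := (orderLE_mono b m).mul (orderLE_mono (d := d) c p)
  rcases lt_or_ge (k + m + p) n with hn | hn
  · rw [(hab.mul (orderLE_mono c p)) n hn, ((orderLE_mono a k).mul hbc) n (by omega)]
  obtain ⟨N, rfl⟩ : ∃ N : ℕ, n = k + m + p - N := ⟨(k + m + p - n).toNat, by omega⟩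
  set F : ℕ → R := fun i => a * (d^[i] b * d^[N - i] c)
  have lhs : ((mono a k * mono b m : PDO R d) * mono c p).coeff (k + m + p - N)
      = ∑ s ∈ range (N + 1),
          (Ring.choose (k : ℚ) s * Ring.choose ((k : ℚ) + m - s) (N - s)) • F s := by
    rw [coeff_mul_mono hab]
    refine sum_congr rfl fun s _ => ?_
    rw [coeff_mono_mul_mono, gbinom_eq_choose, gbinom_eq_choose]
    push_cast
    simp only [F, smul_mul_assoc, mul_smul_comm, smul_smul]
    ring_nf
  have rhs : (mono a k * (mono b m * mono c p) : PDO R d).coeff (k + m + p - N)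
      = ∑ t ∈ range (N + 1), ∑ i ∈ range (t + 1),
          (Ring.choose (k : ℚ) t * Ring.choose (m : ℚ) (N - t) * t.choose i) • F i := by
    rw [show k + m + p - (N : ℤ) = k + (m + p) - N by ring, coeff_mono_mul hbc]
    refine sum_congr rfl fun t ht => ?_
    rw [show m + p - N + t = m + p - ((N - t : ℕ) : ℤ) by simp at ht; omega,
      coeff_mono_mul_mono, gbinom_eq_choose, gbinom_eq_choose, mul_smul_comm _ b,
      AddMonoidHom.iterate_map_rat_smul, hd.iterate_map_mul, smul_sum, smul_sum, mul_sum]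
    refine sum_congr rfl fun i hi => ?_
    rw [← Function.iterate_add_apply,
      show t - i + (N - t) = N - i by simp at ht hi; omega]
    simp only [F, ← Nat.cast_smul_eq_nsmul ℚ, mul_smul_comm, smul_smul]
    ring_nf
  rw [lhs, rhs, Ring.sum_sum_choose_smul]

theorem exists_eq_sum_mono_add (A : PDO R d) {N : ℤ} (hA : OrderLE A N) (K : ℤ) :
    ∃ T, OrderLE T (K - 1) ∧ A = ∑ q ∈ Icc K N, mono (A.coeff q) q + T := by
  refine ⟨A - ∑ q ∈ Icc K N, mono (A.coeff q) q, fun n hn => ?_, by abel⟩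
  simp only [sub_coeff, sum_coeff, mono_coeff, sum_ite_eq, mem_Icc]
  split_ifs with h
  · exact sub_self _
  · rw [hA n (by omega), sub_zero]

theorem map_eq_zero_of_mono {G : Type*} [AddCommGroup G] (g : PDO R d →+ G) {N K : ℤ}
    (hlow : ∀ T, OrderLE T (K - 1) → g T = 0) (hmono : ∀ r q, q ≤ N → g (mono r q) = 0)
    {A : PDO R d} (hA : OrderLE A N) : g A = 0 := by
  obtain ⟨T, hT, hAT⟩ := exists_eq_sum_mono_add A hA K
  rw [hAT, map_add, map_sum, hlow T hT, add_zero]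
  exact sum_eq_zero fun q hq => hmono _ q (mem_Icc.1 hq).2

theorem mul_assoc' (hd : Leibniz d) (A B C : PDO R d) : A * B * C = A * (B * C) := by
  ext n
  obtain ⟨N, hA, hB, hC⟩ := exists_orderLE₃ A B C
  set f : PDO R d → PDO R d → PDO R d → R := fun X Y Z =>
    (X * Y * Z).coeff n - (X * (Y * Z)).coeff n
  have small : ∀ X Y Z a b c, OrderLE X a → OrderLE Y b → OrderLE Z c → a + b + c < n →
      f X Y Z = 0 := fun X Y Z a b c hX hY hZ h => by
    simp [f, (hX.mul hY).mul hZ n h, hX.mul (hY.mul hZ) n (by omega)]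
  have hle := fun a k (hk : k ≤ N) => (orderLE_mono (d := d) a k).mono hk
  suffices f A B C = 0 from sub_eq_zero.1 this
  refine map_eq_zero_of_mono (K := n - 2 * N) (AddMonoidHom.mk' (f · B C) fun X X' => by
      simp only [f, add_mul', add_coeff]; abel)
    (fun X hX => small X B C _ N N hX hB hC (by omega)) (fun a k hk => ?_) hA
  refine map_eq_zero_of_mono (K := n - 2 * N) (AddMonoidHom.mk' (f (mono a k) · C)
      fun Y Y' => by simp only [f, add_mul', mul_add', add_coeff]; abel)
    (fun Y hY => small _ Y C N _ N (hle a k hk) hY hC (by omega)) (fun b m hm => ?_) hB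
  refine map_eq_zero_of_mono (K := n - 2 * N) (AddMonoidHom.mk' (f (mono a k) (mono b m) ·)
      fun Z Z' => by simp only [f, mul_add', add_coeff]; abel)
    (fun Z hZ => small _ _ Z N N _ (hle a k hk) (hle b m hm) hZ (by omega))
    (fun c p _ => ?_) hC
  simp [f, mul_assoc_mono hd]

theorem exists_orderLE_ge (A : PDO R d) (n : ℤ) : ∃ N : ℕ, OrderLE A (n + N) := by
  obtain ⟨x, hx⟩ := A.bdd
  exact ⟨(x - n).toNat, OrderLE.mono hx (by omega)⟩

theorem const_mul_coeff (r : R) (A : PDO R d) (n : ℤ) :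
    (const r * A).coeff n = r * A.coeff n := by
  obtain ⟨N, hA⟩ := exists_orderLE_ge A n
  rw [show n = 0 + (n + N) - N by ring, const, coeff_mono_mul hA,
    sum_eq_single_of_mem 0 (by simp) fun t _ ht => by
      rw [gbinom_eq_zero_of_lt le_rfl (by omega), zero_smul, mul_zero]]
  simp [gbinom_zero_right]

theorem mul_const_coeff {r : R} (hr : d r = 0) (A : PDO R d) (n : ℤ) :
    (A * const r).coeff n = A.coeff n * r := by
  obtain ⟨N, hA⟩ := exists_orderLE_ge A n
  rw [show n = n + N + 0 - N by ring, const, coeff_mul_mono hA,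
    sum_eq_single_of_mem N (by simp) fun s hs hsN => by
      rw [AddMonoidHom.iterate_eq_zero hr (by simp at hs; omega), smul_zero, mul_zero]]
  simp [gbinom_zero_right]

theorem one_mul' (A : PDO R d) : 1 * A = A :=
  ext fun n => (const_mul_coeff 1 A n).trans (one_mul _)

theorem mul_one' (hd : Leibniz d) (A : PDO R d) : A * 1 = A :=
  ext fun n => (mul_const_coeff hd.map_one A n).trans (mul_one _)

/-- Not an instance, as it needs `hd`; `npow` is the given `^`, so that `Monoid` lemmas apply
to `M ^ n`. -/
noncomputable abbrev ring (hd : Leibniz d) : Ring (PDO R d) :=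
  { (inferInstance : AddCommGroup (PDO R d)) with
    mul_assoc := mul_assoc' hd
    one_mul := one_mul'
    mul_one := mul_one' hd
    left_distrib := mul_add'
    right_distrib := add_mul'
    zero_mul := zero_mul'
    mul_zero := mul_zero'
    npow := fun n A => A ^ n
    npow_zero := fun _ => rfl
    npow_succ := fun _ _ => rfl }

theorem commute_const {r : R} (hr : d r = 0) (A : PDO R d) : Commute (const r) A :=
  ext fun n => by rw [const_mul_coeff, mul_const_coeff hr, mul_comm]

theorem mulTerm_mapHom {D : R →+ R} (hD : Leibniz D) (hDd : ∀ r, D (d r) = d (D r))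
    (A B : PDO R d) (n k m : ℤ) :
    D (mulTerm A B n k m) = mulTerm (mapHom D A) B n k m + mulTerm A (mapHom D B) n k m := by
  have hDdj (j : ℕ) (r : R) : D (d^[j] r) = d^[j] (D r) :=
    (Function.Commute.iterate_right (f := D) (g := d) hDd j r)
  unfold mulTerm
  split_ifs
  · rw [mul_smul_comm, map_rat_smul, hD, hDdj, mapHom_coeff, mapHom_coeff, mul_smul_comm,
      mul_smul_comm, ← smul_add]
    ring_nf
  · simp

theorem mapHom_mul {D : R →+ R} (hD : Leibniz D) (hDd : ∀ r, D (d r) = d (D r))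
    (A B : PDO R d) : mapHom D (A * B) = mapHom D A * B + A * mapHom D B := by
  ext n
  obtain ⟨N, hA, hB, -⟩ := exists_orderLE₃ A B B
  have hDA : OrderLE (mapHom D A) N := fun n hn => by simp [hA n hn]
  have hDB : OrderLE (mapHom D B) N := fun n hn => by simp [hB n hn]
  simp only [mapHom_coeff, add_coeff, coeff_mul_eq_sum_Icc hA hB, coeff_mul_eq_sum_Icc hDA hB,
    coeff_mul_eq_sum_Icc hA hDB, map_sum, mulTerm_mapHom hD hDd, sum_add_distrib]

theorem coeff_mul_add_of_orderLE {A B : PDO R d} {a b : ℤ} (hA : OrderLE A a)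
    (hB : OrderLE B b) : (A * B).coeff (a + b) = A.coeff a * B.coeff b := by
  rw [coeff_mul_eq_sum {a} {b} fun k m hk hm hkm => ?_, sum_singleton, sum_singleton, mulTerm,
    dif_pos (by omega), show a + b - (a + b) = 0 by ring]
  · simp [gbinom_zero_right]
  · have := hA.le_of_coeff_ne_zero hk
    have := hB.le_of_coeff_ne_zero hm
    simp only [mem_singleton]
    omega

theorem exists_orderLE_coeff_ne_zero {A : PDO R d} (hA : A ≠ 0) :
    ∃ r, OrderLE A r ∧ A.coeff r ≠ 0 := by
  obtain ⟨N, hN⟩ := A.bdd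
  obtain ⟨r, hr, hmax⟩ := Int.exists_greatest_of_bdd (P := fun n => A.coeff n ≠ 0)
    ⟨N, fun n hn => not_lt.1 fun h => hn (hN n h)⟩
    (by by_contra! h; exact hA (ext fun n => h n))
  exact ⟨r, fun n hn => not_not.1 fun h => absurd (hmax n h) (not_le.2 hn), hr⟩

/-- The leading coefficient of `Y * M + M * Y` is `2 y_r m_p`. -/
theorem eq_zero_of_mul_add_mul_eq_zero {M Y : PDO R d} {p : ℤ} (hM : OrderLE M p)
    (hMp : IsUnit (M.coeff p)) (hY : Y * M + M * Y = 0) : Y = 0 := by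
  by_contra hY0
  obtain ⟨r, hr, hYr⟩ := exists_orderLE_coeff_ne_zero hY0
  have lead : (Y * M + M * Y).coeff (r + p) = 0 := by rw [hY]; rfl
  rw [add_coeff, coeff_mul_add_of_orderLE hr hM, add_comm r p,
    coeff_mul_add_of_orderLE hM hr] at lead
  have : (2 : ℚ) • (Y.coeff r * M.coeff p) = 0 := by
    rw [two_smul]; linear_combination lead
  exact hYr (hMp.mul_left_eq_zero.1 ((smul_eq_zero.1 this).resolve_left two_ne_zero))

/-- `δ₁ M - δ₂ M` anticommutes with `M`. -/
theorem map_pow_succ_eq_of_map_mul_self_eq (hd : Leibniz d) {δ₁ δ₂ : PDO R d → PDO R d}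
    (h₁ : ∀ A B, δ₁ (A * B) = δ₁ A * B + A * δ₁ B) (h₂ : ∀ A B, δ₂ (A * B) = δ₂ A * B + A * δ₂ B)
    {M : PDO R d} {p : ℤ} (hM : OrderLE M p) (hMp : IsUnit (M.coeff p))
    (hMM : δ₁ (M * M) = δ₂ (M * M)) (n : ℕ) : δ₁ (M ^ (n + 1)) = δ₂ (M ^ (n + 1)) := by
  let _ := ring hd
  have hδM : δ₁ M = δ₂ M := sub_eq_zero.1 <| eq_zero_of_mul_add_mul_eq_zero hM hMp <| by
    rw [sub_mul, mul_sub, sub_add_sub_comm, ← h₁, ← h₂, hMM, sub_self]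
  induction n with
  | zero => rwa [zero_add, pow_one]
  | succ n ih => rw [pow_succ, h₁, h₂, ih, hδM]

theorem lax_equation_pow_succ (hd : Leibniz d) {h : Rˣ} (hdh : d h = 0) {D : R →+ R}
    (hD : Leibniz D) (hDd : ∀ r, D (d r) = d (D r)) {M : PDO R d} {p : ℤ} (hM : OrderLE M p)
    (hMp : IsUnit (M.coeff p)) {c : ℚ} (hc : c ≠ 0) {Q L : PDO R d} (hML : M * M = L)
    (hLax : mapHom D L = c • (const ((h⁻¹ : Rˣ) : R) * comm Q L)) (n : ℕ) :
    c⁻¹ • (const (h : R) * mapHom D (M ^ (n + 1))) = comm Q (M ^ (n + 1)) := by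
  let _ := ring hd
  refine map_pow_succ_eq_of_map_mul_self_eq hd
    (δ₁ := fun X => c⁻¹ • (const (h : R) * mapHom D X)) (δ₂ := comm Q) (fun A B => ?_)
    (fun A B => ?_) hM hMp ?_ n
  · simp only [mapHom_mul hD hDd, mul_add, smul_add, smul_mul_assoc, mul_smul_comm, ← mul_assoc,
      (commute_const hdh A).eq]
  · unfold comm; noncomm_ring
  · have hh : (const (h : R) * const ((h⁻¹ : Rˣ) : R) : PDO R d) = 1 := ext fun n => by
      simp [const_mul_coeff]
    rw [hML, hLax, mul_smul_comm, smul_smul, inv_mul_cancel₀ hc, one_smul, ← mul_assoc, hh,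
      one_mul]

theorem pos_add_negp (A : PDO R d) : pos A + negp A = A :=
  ext fun n => by by_cases hn : 0 ≤ n <;> simp [hn, not_lt.2, lt_of_not_ge]

theorem pos_sub (A B : PDO R d) : pos (A - B) = pos A - pos B :=
  ext fun n => by by_cases hn : 0 ≤ n <;> simp [hn]

theorem negp_sub (A B : PDO R d) : negp (A - B) = negp A - negp B :=
  ext fun n => by by_cases hn : n < 0 <;> simp [hn]

theorem pos_eq_self {A : PDO R d} (hA : ∀ n < 0, A.coeff n = 0) : pos A = A :=
  ext fun n => by by_cases hn : 0 ≤ n <;> simp [hn, hA n (lt_of_not_ge _)]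

theorem pos_eq_zero {A : PDO R d} (hA : OrderLE A (-1)) : pos A = 0 :=
  ext fun n => by
    by_cases hn : 0 ≤ n
    · simp [hn, hA n (by omega)]
    · simp [hn]

theorem negp_eq_self {A : PDO R d} (hA : OrderLE A (-1)) : negp A = A :=
  ext fun n => by
    by_cases hn : n < 0
    · simp [hn]
    · simp [hn, hA n (by omega)]

theorem negp_eq_zero {A : PDO R d} (hA : ∀ n < 0, A.coeff n = 0) : negp A = 0 :=
  ext fun n => by by_cases hn : n < 0 <;> simp [hn, hA n]

theorem orderLE_negp (A : PDO R d) : OrderLE (negp A) (-1) :=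
  fun n hn => if_neg (by omega)

theorem coeff_pos_mul_pos (A B : PDO R d) {n : ℤ} (hn : n < 0) :
    (pos A * pos B).coeff n = 0 := by
  rw [coeff_mul]
  refine finsum_eq_zero_of_forall_eq_zero fun k => finsum_eq_zero_of_forall_eq_zero fun m => ?_
  unfold mulTerm
  split_ifs
  · by_cases hk : 0 ≤ k
    · by_cases hm : 0 ≤ m
      · rw [gbinom_eq_zero_of_lt hk (by omega), zero_smul, mul_zero]
      · simp [hm]
    · simp [hk]
  · rfl

theorem comm_pos_pos_coeff (A B : PDO R d) (n : ℤ) (hn : n < 0) :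
    (comm (pos A) (pos B)).coeff n = 0 := by
  simp [comm, coeff_pos_mul_pos _ _ hn]

theorem orderLE_comm_negp_negp (A B : PDO R d) : OrderLE (comm (negp A) (negp B)) (-1) :=
  fun n hn => by
    simp [comm, (orderLE_negp A).mul (orderLE_negp B) n (by omega),
      (orderLE_negp B).mul (orderLE_negp A) n (by omega)]

theorem comm_pos_sub_comm_pos (hd : Leibniz d) {A B : PDO R d} (hAB : Commute A B) :
    comm (pos A) B - comm (pos B) A = comm (pos A) (pos B) - comm (negp A) (negp B) := by
  let _ := ring hd
  have split : ∀ P N P' N' : PDO R d, comm P (P' + N') - comm P' (P + N)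
      - (comm P P' - comm N N') = (P + N) * (P' + N') - (P' + N') * (P + N) := by
    intros; unfold comm; noncomm_ring
  have := split (pos A) (negp A) (pos B) (negp B)
  rwa [pos_add_negp, pos_add_negp, hAB.eq, sub_self, sub_eq_zero] at this

theorem zero_curvature_pos (hd : Leibniz d) {A B : PDO R d} (hAB : Commute A B) :
    pos (comm (pos A) B) - pos (comm (pos B) A) = comm (pos A) (pos B) := by
  rw [← pos_sub, comm_pos_sub_comm_pos hd hAB, pos_sub, pos_eq_self (comm_pos_pos_coeff A B),
    pos_eq_zero (orderLE_comm_negp_negp A B), sub_zero]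

theorem zero_curvature_negp (hd : Leibniz d) {A B : PDO R d} (hAB : Commute A B) :
    -negp (comm (pos A) B) - -negp (comm (pos B) A) = comm (-negp A) (-negp B) := by
  let _ := ring hd
  rw [← neg_sub', ← negp_sub, comm_pos_sub_comm_pos hd hAB, negp_sub,
    negp_eq_zero (comm_pos_pos_coeff A B), negp_eq_self (orderLE_comm_negp_negp A B), zero_sub,
    neg_neg]
  unfold comm
  noncomm_ring

theorem smul_const_mul_mapHom_pos (c : ℚ) (r : R) (D : R →+ R) (X : PDO R d) :
    c • (const r * mapHom D (pos X)) = pos (c • (const r * mapHom D X)) :=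
  ext fun n => by by_cases hn : 0 ≤ n <;> simp [hn, const_mul_coeff]

theorem smul_const_mul_mapHom_neg_negp (c : ℚ) (r : R) (D : R →+ R) (X : PDO R d) :
    c • (const r * mapHom D (-negp X)) = -negp (c • (const r * mapHom D X)) :=
  ext fun n => by by_cases hn : n < 0 <;> simp [hn, const_mul_coeff]

end PDO

theorem kdvA_ne_zero (n : ℕ) : kdvA n ≠ 0 :=
  one_div_ne_zero (Nat.cast_ne_zero.2 (Nat.doubleFactorial_pos _).ne')

theorem zakharov_shabat_general
    (R : Type) [CommRing R] [Algebra ℚ R] (d : R →+ R)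
    (hd : Leibniz d) (h : Rˣ) (hdh : d (h : R) = 0)
    (Dk Dl : R →+ R) (hDk : Leibniz Dk) (hDl : Leibniz Dl)
    (hDkd : ∀ r : R, Dk (d r) = d (Dk r)) (hDld : ∀ r : R, Dl (d r) = d (Dl r))
    (u : R) (k l : ℕ)
    (M : PDO R d) (hM1 : M.coeff 1 = (h : R)) (hM2 : ∀ j : ℤ, 1 < j → M.coeff j = 0)
    (hM3 : M * M = PDO.Lop h u)
    (hLaxk : PDO.mapHom Dk (PDO.Lop h u)
      = kdvA k • (PDO.const ((h⁻¹ : Rˣ) : R)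
          * PDO.comm (PDO.pos (M ^ (2 * k + 1))) (PDO.Lop h u)))
    (hLaxl : PDO.mapHom Dl (PDO.Lop h u)
      = kdvA l • (PDO.const ((h⁻¹ : Rˣ) : R)
          * PDO.comm (PDO.pos (M ^ (2 * l + 1))) (PDO.Lop h u))) :
    ((kdvA k)⁻¹ • (PDO.const (h : R) * PDO.mapHom Dk (PDO.pos (M ^ (2 * l + 1))))
        - (kdvA l)⁻¹ • (PDO.const (h : R) * PDO.mapHom Dl (PDO.pos (M ^ (2 * k + 1))))
      = PDO.comm (PDO.pos (M ^ (2 * k + 1))) (PDO.pos (M ^ (2 * l + 1)))) ∧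
    ((kdvA k)⁻¹ • (PDO.const (h : R) * PDO.mapHom Dk (-PDO.negp (M ^ (2 * l + 1))))
        - (kdvA l)⁻¹ • (PDO.const (h : R) * PDO.mapHom Dl (-PDO.negp (M ^ (2 * k + 1))))
      = PDO.comm (-PDO.negp (M ^ (2 * k + 1))) (-PDO.negp (M ^ (2 * l + 1)))) := by
  let _ := PDO.ring hd
  have hMu : IsUnit (M.coeff 1) := hM1 ▸ h.isUnit
  have flow_k :=
    PDO.lax_equation_pow_succ hd hdh hDk hDkd hM2 hMu (kdvA_ne_zero k) hM3 hLaxk (2 * l)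
  have flow_l :=
    PDO.lax_equation_pow_succ hd hdh hDl hDld hM2 hMu (kdvA_ne_zero l) hM3 hLaxl (2 * k)
  have hcomm : Commute (M ^ (2 * k + 1)) (M ^ (2 * l + 1)) := Commute.pow_pow_self M _ _
  constructor
  · rw [PDO.smul_const_mul_mapHom_pos, PDO.smul_const_mul_mapHom_pos, flow_k, flow_l]
    exact PDO.zero_curvature_pos hd hcomm
  · rw [PDO.smul_const_mul_mapHom_neg_negp, PDO.smul_const_mul_mapHom_neg_negp, flow_k, flow_l]
    exact PDO.zero_curvature_negp hd hcomm

/-- Zakharov–Shabat zero-curvature equations follow from the Lax equations: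
`(h/a_k)D_k((L^(ℓ+1/2))₊) − (h/a_ℓ)D_ℓ((L^(k+1/2))₊) = [(L^(k+1/2))₊, (L^(ℓ+1/2))₊]`,
and the same identity with `(·)₊` replaced by `−(·)₋`. -/
theorem zakharov_shabat
    (R : Type) [CommRing R] [Algebra ℚ R] (d : R →+ R)
    (hd : Leibniz d) (h : Rˣ) (hdh : d (h : R) = 0)
    (Dk Dl : R →+ R) (hDk : Leibniz Dk) (hDl : Leibniz Dl)
    (hDkd : ∀ r : R, Dk (d r) = d (Dk r)) (hDld : ∀ r : R, Dl (d r) = d (Dl r))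
    (hDkh : Dk (h : R) = 0) (hDlh : Dl (h : R) = 0)
    (u : R) (k l : ℕ)
    (M : PDO R d) (hM1 : M.coeff 1 = (h : R)) (hM2 : ∀ j : ℤ, 1 < j → M.coeff j = 0)
    (hM3 : M * M = PDO.Lop h u)
    (hLaxk : PDO.mapHom Dk (PDO.Lop h u)
      = kdvA k • (PDO.const ((h⁻¹ : Rˣ) : R)
          * PDO.comm (PDO.pos (M ^ (2 * k + 1))) (PDO.Lop h u)))
    (hLaxl : PDO.mapHom Dl (PDO.Lop h u)
      = kdvA l • (PDO.const ((h⁻¹ : Rˣ) : R)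
          * PDO.comm (PDO.pos (M ^ (2 * l + 1))) (PDO.Lop h u))) :
    ((kdvA k)⁻¹ • (PDO.const (h : R) * PDO.mapHom Dk (PDO.pos (M ^ (2 * l + 1))))
        - (kdvA l)⁻¹ • (PDO.const (h : R) * PDO.mapHom Dl (PDO.pos (M ^ (2 * k + 1))))
      = PDO.comm (PDO.pos (M ^ (2 * k + 1))) (PDO.pos (M ^ (2 * l + 1)))) ∧
    ((kdvA k)⁻¹ • (PDO.const (h : R) * PDO.mapHom Dk (-PDO.negp (M ^ (2 * l + 1))))
        - (kdvA l)⁻¹ • (PDO.const (h : R) * PDO.mapHom Dl (-PDO.negp (M ^ (2 * k + 1))))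
      = PDO.comm (-PDO.negp (M ^ (2 * k + 1))) (-PDO.negp (M ^ (2 * l + 1)))) :=
  zakharov_shabat_general R d hd h hdh Dk Dl hDk hDl hDkd hDld u k l M hM1 hM2 hM3 hLaxk hLaxl
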